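/- arXiv:2501.06366 — 5 statements merged into one kernel-verified Lean document; each statement's English description precedes it below -/
import Mathlib

section
/- (Optimality of stationary CF policies) In a stationary contextual MDP with discount factor γ ∈ (0,1) and bounded rewards, there exists a stationary counterfactually fair policy π^opt ∈ SCF, depending only on the current counterfactual state vector S_t, such that J(π^opt) = sup over all history-dependent counterfactually fair policies π ∈ HCF of J(π), where J(π) = E_π[Σ_{t≥0} γ^t R_t]. -/
open Filter

/-- Expected discounted cumulative reward over a finite horizon `n`, starting
from history `h` and current state `s`, under a (possibly randomized)
history-dependent policy `π` in a stationary MDP with transition kernel `P`,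
reward `r` and discount factor `γ`. -/
noncomputable def val {S A : Type*} [Fintype S] [Fintype A]
    (P : S → A → PMF S) (r : S → A → ℝ) (γ : ℝ)
    (π : List (S × A) → S → PMF A) : ℕ → List (S × A) → S → ℝ
  | 0, _, _ => 0
  | n + 1, h, s =>
      ∑ a, ((π h s) a).toReal *
        (r s a + γ * ∑ s', ((P s a) s').toReal * val P r γ π n (h ++ [(s, a)]) s')

set_option linter.unusedSectionVars false

section Aux

variable {S : Type*} [Fintype S]

lemma psum_one (p : PMF S) : ∑ s, (p s).toReal = 1 := by
  have h := p.tsum_coe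
  rw [tsum_fintype] at h
  rw [← ENNReal.toReal_sum (fun s _ => p.apply_ne_top s), h, ENNReal.toReal_one]

lemma pmf_wsum_le (p : PMF S) (f : S → ℝ) (B : ℝ) (hf : ∀ s, f s ≤ B) :
    ∑ s, (p s).toReal * f s ≤ B := by
  calc ∑ s, (p s).toReal * f s ≤ ∑ s, (p s).toReal * B :=
        Finset.sum_le_sum fun s _ =>
          mul_le_mul_of_nonneg_left (hf s) ENNReal.toReal_nonneg
    _ = B := by rw [← Finset.sum_mul, psum_one, one_mul]

lemma pmf_wsum_abs (p : PMF S) (f g : S → ℝ) (B : ℝ) (h : ∀ s, |f s - g s| ≤ B) :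
    |∑ s, (p s).toReal * f s - ∑ s, (p s).toReal * g s| ≤ B := by
  rw [← Finset.sum_sub_distrib]
  have he : ∀ s : S, (p s).toReal * f s - (p s).toReal * g s
      = (p s).toReal * (f s - g s) := fun s => by ring
  simp_rw [he]
  calc |∑ s, (p s).toReal * (f s - g s)| ≤ ∑ s, |(p s).toReal * (f s - g s)| :=
        Finset.abs_sum_le_sum_abs _ _
    _ ≤ ∑ s, (p s).toReal * B := Finset.sum_le_sum fun s _ => by
        rw [abs_mul, abs_of_nonneg ENNReal.toReal_nonneg]
        exact mul_le_mul_of_nonneg_left (h s) ENNReal.toReal_nonneg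
    _ = B := by rw [← Finset.sum_mul, psum_one, one_mul]

lemma sum_pure {A : Type*} [Fintype A] [DecidableEq A] (a0 : A) (f : A → ℝ) :
    ∑ a, ((PMF.pure a0) a).toReal * f a = f a0 := by
  rw [Finset.sum_eq_single a0]
  · simp [PMF.pure_apply]
  · intro b _ hb; simp [PMF.pure_apply, hb]
  · simp

variable {A : Type*} [Fintype A] [Nonempty A]

/-- Bellman optimality operator. -/
noncomputable def Topt (P : S → A → PMF S) (r : S → A → ℝ) (γ : ℝ)
    (V : S → ℝ) (s : S) : ℝ :=
  Finset.univ.sup' Finset.univ_nonempty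
    (fun a => r s a + γ * ∑ s', ((P s a) s').toReal * V s')

lemma topt_sub_le (P : S → A → PMF S) (r : S → A → ℝ) {γ : ℝ} (hγ0 : 0 ≤ γ)
    (V W : S → ℝ) (s : S) : Topt P r γ V s - Topt P r γ W s ≤ γ * dist V W := by
  rw [sub_le_iff_le_add]
  apply Finset.sup'_le
  intro a _
  have hle : (∑ s', ((P s a) s').toReal * V s') - (∑ s', ((P s a) s').toReal * W s')
      ≤ dist V W := by
    rw [← Finset.sum_sub_distrib]
    have he : ∀ s' : S, ((P s a) s').toReal * V s' - ((P s a) s').toReal * W s'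
        = ((P s a) s').toReal * (V s' - W s') := fun s' => by ring
    simp_rw [he]
    apply pmf_wsum_le
    intro s'
    have h1 := dist_le_pi_dist V W s'
    rw [Real.dist_eq] at h1
    exact (le_abs_self _).trans h1
  have h2 : r s a + γ * ∑ s', ((P s a) s').toReal * V s'
      ≤ (r s a + γ * ∑ s', ((P s a) s').toReal * W s') + γ * dist V W := by
    nlinarith
  have h3 : r s a + γ * ∑ s', ((P s a) s').toReal * W s' ≤ Topt P r γ W s := by
    unfold Topt
    exact Finset.le_sup' (fun a => r s a + γ * ∑ s', ((P s a) s').toReal * W s')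
      (Finset.mem_univ a)
  linarith

lemma topt_contract (P : S → A → PMF S) (r : S → A → ℝ) {γ : ℝ}
    (hγ0 : 0 ≤ γ) (hγ1 : γ < 1) :
    ContractingWith ⟨γ, hγ0⟩ (Topt P r γ) := by
  constructor
  · exact_mod_cast hγ1
  · apply LipschitzWith.of_dist_le_mul
    intro V W
    show dist (Topt P r γ V) (Topt P r γ W) ≤ γ * dist V W
    have hd : (0:ℝ) ≤ γ * dist V W := mul_nonneg hγ0 dist_nonneg
    rw [dist_pi_le_iff hd]
    intro s
    rw [Real.dist_eq, abs_sub_le_iff]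
    refine ⟨topt_sub_le P r hγ0 V W s, ?_⟩
    have := topt_sub_le P r hγ0 W V s
    rwa [dist_comm] at this

end Aux

section Main

variable {S A : Type*} [Fintype S] [Fintype A] [Nonempty A]

lemma val_le_vstar (P : S → A → PMF S) (r : S → A → ℝ) {γ : ℝ} (hγ0 : 0 ≤ γ)
    (V : S → ℝ)
    (hfix : ∀ s a, r s a + γ * ∑ s', ((P s a) s').toReal * V s' ≤ V s)
    (C : ℝ) (hC : ∀ s, |V s| ≤ C)
    (π : List (S × A) → S → PMF A) :
    ∀ n (h : List (S × A)) (s : S), val P r γ π n h s ≤ V s + γ ^ n * C := by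
  intro n
  induction n with
  | zero =>
    intro h s
    have h1 := abs_le.mp (hC s)
    simp only [val, pow_zero, one_mul]
    linarith [h1.1, h1.2]
  | succ n ih =>
    intro h s
    show (∑ a, ((π h s) a).toReal *
        (r s a + γ * ∑ s', ((P s a) s').toReal * val P r γ π n (h ++ [(s, a)]) s'))
      ≤ V s + γ ^ (n + 1) * C
    apply pmf_wsum_le
    intro a
    have hb : ∑ s', ((P s a) s').toReal * val P r γ π n (h ++ [(s, a)]) s'
        ≤ (∑ s', ((P s a) s').toReal * V s') + γ ^ n * C := by
      calc ∑ s', ((P s a) s').toReal * val P r γ π n (h ++ [(s, a)]) s'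
          ≤ ∑ s', ((P s a) s').toReal * (V s' + γ ^ n * C) :=
            Finset.sum_le_sum fun s' _ =>
              mul_le_mul_of_nonneg_left (ih _ s') ENNReal.toReal_nonneg
        _ = (∑ s', ((P s a) s').toReal * V s')
              + (∑ s', ((P s a) s').toReal) * (γ ^ n * C) := by
            rw [Finset.sum_mul, ← Finset.sum_add_distrib]
            exact Finset.sum_congr rfl fun s' _ => by ring
        _ = (∑ s', ((P s a) s').toReal * V s') + γ ^ n * C := by
            rw [psum_one, one_mul]
    have h2 : γ * (∑ s', ((P s a) s').toReal * val P r γ π n (h ++ [(s, a)]) s')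
        ≤ γ * ((∑ s', ((P s a) s').toReal * V s') + γ ^ n * C) :=
      mul_le_mul_of_nonneg_left hb hγ0
    have h3 := hfix s a
    have hpow : γ ^ (n + 1) = γ * γ ^ n := by ring
    rw [hpow]
    nlinarith

lemma val_greedy_close (P : S → A → PMF S) (r : S → A → ℝ) {γ : ℝ} (hγ0 : 0 ≤ γ)
    (V : S → ℝ) (πopt : S → A)
    (hfix : ∀ s, V s = r s (πopt s)
      + γ * ∑ s', ((P s (πopt s)) s').toReal * V s')
    (C : ℝ) (hC : ∀ s, |V s| ≤ C) :
    ∀ n (h : List (S × A)) (s : S),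
      |val P r γ (fun _ s => PMF.pure (πopt s)) n h s - V s| ≤ γ ^ n * C := by
  classical
  intro n
  induction n with
  | zero =>
    intro h s
    simpa [val] using hC s
  | succ n ih =>
    intro h s
    have hv : val P r γ (fun _ s => PMF.pure (πopt s)) (n + 1) h s
        = r s (πopt s) + γ * ∑ s', ((P s (πopt s)) s').toReal *
            val P r γ (fun _ s => PMF.pure (πopt s)) n (h ++ [(s, πopt s)]) s' := by
      show (∑ a, ((PMF.pure (πopt s)) a).toReal * _) = _
      rw [sum_pure]
    rw [hv, hfix s]
    have hd : |(∑ s', ((P s (πopt s)) s').toReal *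
          val P r γ (fun _ s => PMF.pure (πopt s)) n (h ++ [(s, πopt s)]) s')
        - ∑ s', ((P s (πopt s)) s').toReal * V s'| ≤ γ ^ n * C :=
      pmf_wsum_abs _ _ _ _ (fun s' => ih _ s')
    have key : (r s (πopt s) + γ * ∑ s', ((P s (πopt s)) s').toReal *
          val P r γ (fun _ s => PMF.pure (πopt s)) n (h ++ [(s, πopt s)]) s')
        - (r s (πopt s) + γ * ∑ s', ((P s (πopt s)) s').toReal * V s')
        = γ * ((∑ s', ((P s (πopt s)) s').toReal *
            val P r γ (fun _ s => PMF.pure (πopt s)) n (h ++ [(s, πopt s)]) s')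
          - ∑ s', ((P s (πopt s)) s').toReal * V s') := by ring
    rw [key, abs_mul, abs_of_nonneg hγ0, pow_succ']
    rw [mul_assoc]
    exact mul_le_mul_of_nonneg_left hd hγ0

end Main

/-- Optimality of stationary CF policies: Consider the augmented
stationary MDP induced by a stationary contextual MDP, whose state space is
the space `Fin K → X` of counterfactual state `K`-vectors `S̃_t`, with
transition kernel `P`, (Z-averaged counterfactual) reward `r` bounded by
`Rmax`, and discount `γ ∈ (0,1)`.  History-dependent counterfactually fair
(HCF) policies are randomized policies mapping the augmented history
`(S̄_t, R̄_{t-1}, ā_{t-1})` — here the list of past augmented state/action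
pairs plus the current augmented state — to distributions over the finite
action set; stationary CF (SCF) policies depend only on the current
counterfactual state vector `S̃_t`.  Then there exists a deterministic SCF
policy `π^opt` with `J(π^opt) = sup_{π ∈ HCF} J(π)`, i.e. its value dominates
the value of every HCF policy (values being limits of finite-horizon values). -/
theorem stmt6 {X A : Type*} [Fintype X] [Fintype A] [Nonempty A] {K : ℕ}
    (P : (Fin K → X) → A → PMF (Fin K → X))
    (r : (Fin K → X) → A → ℝ) (γ : ℝ)
    (hγ : 0 < γ) (hγ1 : γ < 1)
    (Rmax : ℝ) (hr : ∀ s a, |r s a| ≤ Rmax) :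
    ∃ πopt : (Fin K → X) → A,
      ∀ (s0 : Fin K → X) (Jopt : ℝ),
        Tendsto (fun n => val P r γ (fun _ s => PMF.pure (πopt s)) n [] s0)
          atTop (nhds Jopt) →
        ∀ (π : List ((Fin K → X) × A) → (Fin K → X) → PMF A) (Jπ : ℝ),
          Tendsto (fun n => val P r γ π n [] s0) atTop (nhds Jπ) →
          Jπ ≤ Jopt := by
  -- optimal value function as fixed point of the Bellman operator
  have hcon : ContractingWith ⟨γ, hγ.le⟩ (Topt P r γ) := topt_contract P r hγ.le hγ1
  set V : (Fin K → X) → ℝ := ContractingWith.fixedPoint (Topt P r γ) hcon with hVdef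
  have hfixpt : Topt P r γ V = V := hcon.fixedPoint_isFixedPt
  -- greedy policy
  have hex : ∀ s : Fin K → X, ∃ a : A, Topt P r γ V s
      = r s a + γ * ∑ s', ((P s a) s').toReal * V s' := by
    intro s
    obtain ⟨a, -, ha⟩ := Finset.exists_mem_eq_sup' (Finset.univ_nonempty (α := A))
      (fun a => r s a + γ * ∑ s', ((P s a) s').toReal * V s')
    exact ⟨a, ha⟩
  choose πopt hgreedy using hex
  have hfix : ∀ s : Fin K → X, V s = r s (πopt s)
      + γ * ∑ s', ((P s (πopt s)) s').toReal * V s' := by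
    intro s
    conv_lhs => rw [← hfixpt]
    exact hgreedy s
  have hfixle : ∀ (s : Fin K → X) (a : A),
      r s a + γ * ∑ s', ((P s a) s').toReal * V s' ≤ V s := by
    intro s a
    conv_rhs => rw [← hfixpt]
    exact Finset.le_sup' (fun a => r s a + γ * ∑ s', ((P s a) s').toReal * V s')
      (Finset.mem_univ a)
  -- bound on V
  set C : ℝ := ∑ s : Fin K → X, |V s| with hCdef
  have hC : ∀ s : Fin K → X, |V s| ≤ C :=
    fun s => Finset.single_le_sum (f := fun s => |V s|)
      (fun s _ => abs_nonneg _) (Finset.mem_univ s)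
  have hC0 : 0 ≤ C := Finset.sum_nonneg fun s _ => abs_nonneg _
  refine ⟨πopt, ?_⟩
  intro s0 Jopt hJopt π Jπ hJπ
  -- the greedy values tend to V s0
  have hpowC : Tendsto (fun n : ℕ => γ ^ n * C) atTop (nhds 0) := by
    have := (tendsto_pow_atTop_nhds_zero_of_lt_one hγ.le hγ1).mul_const C
    simpa using this
  have hgconv : Tendsto (fun n => val P r γ (fun _ s => PMF.pure (πopt s)) n [] s0)
      atTop (nhds (V s0)) := by
    rw [← tendsto_sub_nhds_zero_iff]
    exact squeeze_zero_norm
      (fun n => val_greedy_close P r hγ.le V πopt hfix C hC n [] s0) hpowC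
  have hJopt_eq : Jopt = V s0 := tendsto_nhds_unique hJopt hgconv
  have hub : Tendsto (fun n : ℕ => V s0 + γ ^ n * C) atTop (nhds (V s0)) := by
    have h := Tendsto.add (tendsto_const_nhds (x := V s0) (f := atTop (α := ℕ))) hpowC
    simpa using h
  have hle : Jπ ≤ V s0 :=
    le_of_tendsto_of_tendsto' hJπ hub
      (fun n => val_le_vstar P r hγ.le V hfixle C hC π n [] s0)
  rw [hJopt_eq]
  exact hle
end

section
/- (Margin-based unfairness control) Suppose the optimal Q-function Q̂ learned by the algorithm satisfies a margin condition: for all t, P(0 < max_a Q*(S_t, a) - max_{a ∉ argmax} Q*(S_t, a') ≤ u) ≤ C u^α for small u. If ||Q̂ - Q*||_∞ ≤ ξ and the estimated counterfactual state vectors under two worlds z', z'' differ by at most Lε in Q-value, then the probability that the greedy actions under the two worlds differ is at most 2^{α+1} ξ^α + 2^α (Lε)^α. -/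
open MeasureTheory

lemma aux_rpow_add {α : ℝ} (a b : ℝ) (ha : 0 ≤ a) (hb : 0 ≤ b) (hα : 0 ≤ α)
    (hα1 : α ≤ 1) : (a + b) ^ α ≤ a ^ α + b ^ α := by
  have h := NNReal.rpow_add_le_add_rpow a.toNNReal b.toNNReal hα hα1
  have := NNReal.coe_le_coe.2 h
  simpa [NNReal.coe_rpow, Real.coe_toNNReal a ha, Real.coe_toNNReal b hb] using this

/-- Margin-based unfairness control, Theorem 4: Let `Q*` be
the optimal Q-function with (a.e. unique) greedy action `a*(s)` and
suboptimality gap `Δ(s)` (every non-greedy action is at least `Δ(s)` below the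
max), and suppose the margin condition
`P(0 < Δ(S_t) ≤ u) ≤ u^α` holds (the constant `C` normalized to 1).  Let `Q̂`
satisfy `‖Q̂ - Q*‖_∞ ≤ ξ`, and let the estimated counterfactual state vectors
`σ₁, σ₂` under the two worlds `z', z''` each differ from the exact
counterfactual state `σ` by at most `Lε` in Q-value.  Then the probability
that the greedy actions `π̂₁, π̂₂` of `Q̂` computed in the two worlds differ
is at most `2^{α+1} ξ^α + 2^α (Lε)^α`. -/
theorem stmt11 {Ω S A : Type*} [Fintype A] [Nonempty A] [MeasurableSpace Ω]
    (μ : Measure Ω) [IsProbabilityMeasure μ]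
    (Qstar Qhat : S → A → ℝ) (ξ L ε α : ℝ)
    (hα : 0 < α) (hα1 : α ≤ 1) (hξ : 0 ≤ ξ) (hL : 0 ≤ L) (hε : 0 ≤ ε)
    (σ σ₁ σ₂ : Ω → S)
    (astar : S → A) (Δ : S → ℝ)
    (hmax : ∀ s a, Qstar s a ≤ Qstar s (astar s))
    (hgap : ∀ s b, b ≠ astar s → Qstar s b ≤ Qstar s (astar s) - Δ s)
    (hpos : ∀ ω, 0 < Δ (σ ω))
    (hmargin : ∀ u : ℝ, 0 < u →
      μ {ω | 0 < Δ (σ ω) ∧ Δ (σ ω) ≤ u} ≤ ENNReal.ofReal (u ^ α))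
    (hQ : ∀ s a, |Qhat s a - Qstar s a| ≤ ξ)
    (hpert1 : ∀ ω a, |Qhat (σ₁ ω) a - Qhat (σ ω) a| ≤ L * ε)
    (hpert2 : ∀ ω a, |Qhat (σ₂ ω) a - Qhat (σ ω) a| ≤ L * ε)
    (π₁ π₂ : Ω → A)
    (hg1 : ∀ ω a, Qhat (σ₁ ω) a ≤ Qhat (σ₁ ω) (π₁ ω))
    (hg2 : ∀ ω a, Qhat (σ₂ ω) a ≤ Qhat (σ₂ ω) (π₂ ω)) :
    μ {ω | π₁ ω ≠ π₂ ω}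
      ≤ ENNReal.ofReal (2 ^ (α + 1) * ξ ^ α + 2 ^ α * (L * ε) ^ α) := by
  set u : ℝ := 2 * ξ + 2 * (L * ε) with hu
  have hLε : 0 ≤ L * ε := mul_nonneg hL hε
  have hune : 0 ≤ u := by positivity
  -- key pointwise claim
  have key : {ω | π₁ ω ≠ π₂ ω} ⊆ {ω | 0 < Δ (σ ω) ∧ Δ (σ ω) ≤ u} := by
    intro ω hω
    refine ⟨hpos ω, ?_⟩
    -- one of π₁ ω, π₂ ω differs from astar (σ ω)
    have hone : π₁ ω ≠ astar (σ ω) ∨ π₂ ω ≠ astar (σ ω) := by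
      by_contra h
      push_neg at h
      exact hω (h.1.trans h.2.symm)
    -- generic argument for a maximizer b of Qhat ∘ σᵢ with b ≠ astar
    have gen : ∀ (σi : Ω → S) (b : A),
        (∀ a, |Qhat (σi ω) a - Qhat (σ ω) a| ≤ L * ε) →
        (∀ a, Qhat (σi ω) a ≤ Qhat (σi ω) b) →
        b ≠ astar (σ ω) → Δ (σ ω) ≤ u := by
      intro σi b hpert hgb hb
      have h1 : Qstar (σ ω) b ≤ Qstar (σ ω) (astar (σ ω)) - Δ (σ ω) :=
        hgap _ _ hb
      have h2 : Qhat (σ ω) b ≤ Qstar (σ ω) b + ξ := by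
        have := abs_le.1 (hQ (σ ω) b); linarith [this.1, this.2]
      have h3 : Qhat (σi ω) b ≤ Qhat (σ ω) b + L * ε := by
        have := abs_le.1 (hpert b); linarith [this.1, this.2]
      have h4 : Qhat (σi ω) (astar (σ ω)) ≤ Qhat (σi ω) b := hgb _
      have h5 : Qhat (σ ω) (astar (σ ω)) ≤ Qhat (σi ω) (astar (σ ω)) + L * ε := by
        have := abs_le.1 (hpert (astar (σ ω))); linarith [this.1, this.2]
      have h6 : Qstar (σ ω) (astar (σ ω)) ≤ Qhat (σ ω) (astar (σ ω)) + ξ := by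
        have := abs_le.1 (hQ (σ ω) (astar (σ ω))); linarith [this.1, this.2]
      simp only [hu]; linarith
    rcases hone with hb | hb
    · exact gen σ₁ (π₁ ω) (hpert1 ω) (hg1 ω) hb
    · exact gen σ₂ (π₂ ω) (hpert2 ω) (hg2 ω) hb
  have hRHSnn : 0 ≤ 2 ^ (α + 1) * ξ ^ α + 2 ^ α * (L * ε) ^ α := by positivity
  rcases eq_or_lt_of_le hune with hzero | hupos
  · -- u = 0 : the event is empty
    have : {ω | π₁ ω ≠ π₂ ω} ⊆ (∅ : Set Ω) := by
      intro ω hω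
      have h := key hω
      exact absurd h.2 (not_le.2 (by rw [← hzero]; exact h.1))
    calc μ {ω | π₁ ω ≠ π₂ ω} ≤ μ ∅ := measure_mono this
      _ = 0 := measure_empty
      _ ≤ _ := zero_le
  · calc μ {ω | π₁ ω ≠ π₂ ω} ≤ μ {ω | 0 < Δ (σ ω) ∧ Δ (σ ω) ≤ u} :=
        measure_mono key
      _ ≤ ENNReal.ofReal (u ^ α) := hmargin u hupos
      _ ≤ ENNReal.ofReal (2 ^ (α + 1) * ξ ^ α + 2 ^ α * (L * ε) ^ α) := by
        apply ENNReal.ofReal_le_ofReal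
        have h1 : u ^ α ≤ (2 * ξ) ^ α + (2 * (L * ε)) ^ α :=
          aux_rpow_add _ _ (by positivity) (by positivity) hα.le hα1
        have h2 : (2 * ξ) ^ α = 2 ^ α * ξ ^ α :=
          Real.mul_rpow (by norm_num) hξ
        have h3 : (2 * (L * ε)) ^ α = 2 ^ α * (L * ε) ^ α :=
          Real.mul_rpow (by norm_num) hLε
        have h4 : (2:ℝ) ^ α ≤ 2 ^ (α + 1) :=
          Real.rpow_le_rpow_of_exponent_le (by norm_num) (by linarith)
        have h5 : 2 ^ α * ξ ^ α ≤ 2 ^ (α + 1) * ξ ^ α :=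
          mul_le_mul_of_nonneg_right h4 (Real.rpow_nonneg hξ α)
        linarith [h1, h5, h2.le, h3.le]
end

section
/- In the sequential preprocessing recursion ŝ_t^{z'} = s_t - μ̂(ŝ_{t-1}^{path inputs}) with corrections, if the estimated mean transition μ̂ satisfies ||μ̂ - μ||_∞ ≤ δ and μ is L_μ-Lipschitz in its state argument with L_μ < 1, then the error of the estimated counterfactual state satisfies ||ŝ_t^{z'} - s_t^{z'}|| ≤ δ_0 L_μ^{t-1} + 2δ (1 - L_μ^{t-1})/(1 - L_μ), where δ_0 is the error at time 1; in particular the error remains uniformly bounded by δ_0 + 2δ/(1-L_μ) over all horizons. -/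
/-- Error propagation in the sequential preprocessing
recursion: the true counterfactual states obey
`s^{z'}_{t+1} = s_{t+1} - μ(s_t, a_t, z) + μ(s^{z'}_t, a_t, z')` and the
estimates obey the same recursion with `μ̂` and `ŝ^{z'}` in place of `μ` and
`s^{z'}`.  If `‖μ̂ - μ‖_∞ ≤ δ` and `μ(·, a, z)` is `Lμ`-Lipschitz in the
state with `Lμ < 1`, then (indexing time from `0`)
`‖ŝ^{z'}_t - s^{z'}_t‖ ≤ δ₀ Lμ^t + 2δ (1 - Lμ^t)/(1 - Lμ)` where `δ₀` is the
error at the initial time; in particular the error stays uniformly bounded by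
`δ₀ + 2δ/(1 - Lμ)` over all horizons. -/
theorem stmt13 {E A Z : Type*} [NormedAddCommGroup E]
    (μ μhat : E → A → Z → E) (Lμ δ δ0 : ℝ)
    (hL0 : 0 ≤ Lμ) (hL1 : Lμ < 1) (hδ : 0 ≤ δ)
    (hLip : ∀ (a : A) (ζ : Z) (x y : E), ‖μ x a ζ - μ y a ζ‖ ≤ Lμ * ‖x - y‖)
    (hclose : ∀ (x : E) (a : A) (ζ : Z), ‖μhat x a ζ - μ x a ζ‖ ≤ δ)
    (s : ℕ → E) (a : ℕ → A) (z z' : Z)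
    (strue shat : ℕ → E)
    (htrue : ∀ t, strue (t + 1)
      = s (t + 1) - μ (s t) (a t) z + μ (strue t) (a t) z')
    (hhat : ∀ t, shat (t + 1)
      = s (t + 1) - μhat (s t) (a t) z + μhat (shat t) (a t) z')
    (hδ0 : ‖shat 0 - strue 0‖ ≤ δ0) :
    ∀ t, ‖shat t - strue t‖ ≤ δ0 * Lμ ^ t + 2 * δ * (1 - Lμ ^ t) / (1 - Lμ) ∧
      ‖shat t - strue t‖ ≤ δ0 + 2 * δ / (1 - Lμ) := by
  have h1L : (0:ℝ) < 1 - Lμ := by linarith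
  have hδ0' : 0 ≤ δ0 := le_trans (norm_nonneg _) hδ0
  have main : ∀ t, ‖shat t - strue t‖ ≤ δ0 * Lμ ^ t + 2 * δ * (1 - Lμ ^ t) / (1 - Lμ) := by
    intro t
    induction t with
    | zero => simpa using hδ0
    | succ t ih =>
      have key : ‖shat (t+1) - strue (t+1)‖ ≤ Lμ * ‖shat t - strue t‖ + 2 * δ := by
        have heq : shat (t+1) - strue (t+1)
            = (μ (s t) (a t) z - μhat (s t) (a t) z)
              + (μhat (shat t) (a t) z' - μ (shat t) (a t) z')
              + (μ (shat t) (a t) z' - μ (strue t) (a t) z') := by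
          rw [htrue t, hhat t]; abel
        calc ‖shat (t+1) - strue (t+1)‖
            ≤ ‖μ (s t) (a t) z - μhat (s t) (a t) z‖
              + ‖μhat (shat t) (a t) z' - μ (shat t) (a t) z'‖
              + ‖μ (shat t) (a t) z' - μ (strue t) (a t) z'‖ := by
              rw [heq]; exact norm_add₃_le
          _ ≤ δ + δ + Lμ * ‖shat t - strue t‖ := by
              gcongr
              · rw [norm_sub_rev]; exact hclose _ _ _
              · exact hclose _ _ _
              · exact hLip _ _ _ _
          _ = Lμ * ‖shat t - strue t‖ + 2 * δ := by ring
      calc ‖shat (t+1) - strue (t+1)‖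
          ≤ Lμ * ‖shat t - strue t‖ + 2 * δ := key
        _ ≤ Lμ * (δ0 * Lμ ^ t + 2 * δ * (1 - Lμ ^ t) / (1 - Lμ)) + 2 * δ := by
            gcongr
        _ = δ0 * Lμ ^ (t+1) + 2 * δ * (1 - Lμ ^ (t+1)) / (1 - Lμ) := by
            field_simp; ring
  intro t
  refine ⟨main t, le_trans (main t) ?_⟩
  have hpow : 0 ≤ Lμ ^ t := pow_nonneg hL0 t
  have hpow1 : Lμ ^ t ≤ 1 := pow_le_one₀ hL0 (le_of_lt hL1)
  have h2 : 2 * δ * (1 - Lμ ^ t) / (1 - Lμ) ≤ 2 * δ / (1 - Lμ) := by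
    apply div_le_div_of_nonneg_right ?_ h1L.le
    nlinarith
  nlinarith
end

section
/- Perturbed least-squares stability: let ŵ = Σ̂^{-1}(1/n)Σ_i φ(ŝ_i,a_i) y_i and w = Σ^{-1} E[φ(s,a) y] be least-squares solutions computed from perturbed versus true features, where the features are coordinatewise L-Lipschitz, ||ŝ_i - s_i||_∞ ≤ ε, |y_i| ≤ V, ||φ||_2 ≤ 1, and λ_min(Σ̂) ≥ λ_0 with dLε < λ_0/4. Then ||ŵ - w̃||_2 ≤ C d L V ε / (λ_0(λ_0 - 4dLε)), where w̃ is the solution using the true features on the same samples and C is a universal constant. -/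
open Matrix

private lemma abs_dot_le {d : ℕ} (v w : Fin d → ℝ) :
    |v ⬝ᵥ w| ≤ Real.sqrt (∑ j, v j ^ 2) * Real.sqrt (∑ j, w j ^ 2) := by
  have h := Finset.sum_mul_sq_le_sq_mul_sq Finset.univ v w
  calc |v ⬝ᵥ w| = Real.sqrt ((v ⬝ᵥ w) ^ 2) := (Real.sqrt_sq_eq_abs _).symm
    _ ≤ Real.sqrt ((∑ j, v j ^ 2) * ∑ j, w j ^ 2) := Real.sqrt_le_sqrt h
    _ = _ := Real.sqrt_mul (by positivity) _

private lemma quad_repr {d m : ℕ} (ψ : Fin m → Fin d → ℝ) (c : ℝ) (v w : Fin d → ℝ) :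
    v ⬝ᵥ ((c • ∑ i, vecMulVec (ψ i) (ψ i)) *ᵥ w) = c * ∑ i, (ψ i ⬝ᵥ v) * (ψ i ⬝ᵥ w) := by
  simp only [Matrix.mulVec, dotProduct, Matrix.smul_apply, Matrix.sum_apply,
    Matrix.vecMulVec_apply, Finset.sum_apply, Pi.smul_apply, smul_eq_mul, Finset.mul_sum,
    Finset.sum_mul]
  refine Eq.trans (Finset.sum_congr rfl fun x _ => Finset.sum_comm) ?_
  rw [Finset.sum_comm]
  exact Finset.sum_congr rfl fun i _ => Eq.trans Finset.sum_comm
    (Finset.sum_congr rfl fun j _ => Finset.sum_congr rfl fun k _ => by ring)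

private lemma dot_avg {d m : ℕ} (c : ℝ) (x : Fin m → ℝ) (ψ : Fin m → Fin d → ℝ) (v : Fin d → ℝ) :
    v ⬝ᵥ (c • ∑ i, x i • ψ i) = c * ∑ i, x i * (ψ i ⬝ᵥ v) := by
  simp only [dotProduct, Pi.smul_apply, Finset.sum_apply, smul_eq_mul, Finset.mul_sum]
  rw [Finset.sum_comm]
  exact Finset.sum_congr rfl fun i _ => Finset.sum_congr rfl fun j _ => by ring

private lemma quad_lower {d : ℕ} {M : Matrix (Fin d) (Fin d) ℝ} {lam : ℝ}
    (h : ∀ v : Fin d → ℝ, ∑ j, (v j) ^ 2 = 1 → lam ≤ v ⬝ᵥ (M *ᵥ v)) (v : Fin d → ℝ) :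
    lam * ∑ j, (v j) ^ 2 ≤ v ⬝ᵥ (M *ᵥ v) := by
  by_cases hv : ∑ j, (v j) ^ 2 = 0
  · have hv0 : v = 0 := by
      funext j
      have := (Finset.sum_eq_zero_iff_of_nonneg (fun i _ => sq_nonneg (v i))).mp hv j
        (Finset.mem_univ j)
      exact pow_eq_zero_iff (n := 2) (by norm_num) |>.mp this
    simp [hv, hv0]
  · have hpos : 0 < ∑ j, (v j) ^ 2 :=
      lt_of_le_of_ne (Finset.sum_nonneg fun i _ => sq_nonneg _) (Ne.symm hv)
    set r : ℝ := Real.sqrt (∑ j, (v j) ^ 2) with hr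
    have hrpos : 0 < r := Real.sqrt_pos.mpr hpos
    have hr2 : r ^ 2 = ∑ j, (v j) ^ 2 := Real.sq_sqrt hpos.le
    have hu : ∑ j, ((r⁻¹ • v) j) ^ 2 = 1 := by
      simp only [Pi.smul_apply, smul_eq_mul, mul_pow, ← Finset.mul_sum]
      rw [← hr2]; field_simp
    have h1 := h (r⁻¹ • v) hu
    have h2 : (r⁻¹ • v) ⬝ᵥ (M *ᵥ (r⁻¹ • v)) = r⁻¹ * r⁻¹ * (v ⬝ᵥ (M *ᵥ v)) := by
      rw [Matrix.mulVec_smul, smul_dotProduct, dotProduct_smul]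
      simp only [smul_eq_mul]; ring
    rw [h2] at h1
    have := mul_le_mul_of_nonneg_left h1 (le_of_lt (by positivity : (0:ℝ) < r * r))
    have hrr : r * r = ∑ j, (v j) ^ 2 := by rw [← hr2]; ring
    calc lam * ∑ j, (v j) ^ 2 = r * r * lam := by rw [hrr]; ring
      _ ≤ r * r * (r⁻¹ * r⁻¹ * (v ⬝ᵥ (M *ᵥ v))) := this
      _ = v ⬝ᵥ (M *ᵥ v) := by field_simp

private lemma herm_aux {d m : ℕ} (ψ : Fin m → Fin d → ℝ) (c : ℝ) :
    ((c • ∑ i, vecMulVec (ψ i) (ψ i)) : Matrix (Fin d) (Fin d) ℝ).IsHermitian := by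
  unfold Matrix.IsHermitian
  ext i j
  simp only [Matrix.conjTranspose_apply, Matrix.smul_apply, Matrix.sum_apply,
    Matrix.vecMulVec_apply, star_trivial, smul_eq_mul]
  rw [Finset.mul_sum, Finset.mul_sum]
  exact Finset.sum_congr rfl fun k _ => by ring

set_option maxHeartbeats 2000000 in
/-- Perturbed least-squares stability: there is a universal
constant `C > 0` such that the following holds.  Take coordinatewise
`L`-Lipschitz features `φ(s,a) ∈ ℝ^d` with `‖φ‖₂ ≤ 1`, samples
`(sᵢ, aᵢ, yᵢ)` with `|yᵢ| ≤ V`, and perturbed states `ŝᵢ` with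
`dist(ŝᵢ, sᵢ) ≤ ε`.  Let `Σ̂` and `Σ̃` be the empirical second-moment
matrices of the perturbed and true features, and let
`ŵ = Σ̂⁻¹ (1/n) Σᵢ yᵢ φ(ŝᵢ,aᵢ)` and `w̃ = Σ̃⁻¹ (1/n) Σᵢ yᵢ φ(sᵢ,aᵢ)` be the
corresponding least-squares solutions on the same samples.  If
`λ_min(Σ̂) ≥ λ₀` (via the quadratic form) and `dLε < λ₀/4`, then
`‖ŵ - w̃‖₂ ≤ C d L V ε / (λ₀ (λ₀ - 4 d L ε))`. -/
theorem stmt15 :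
    ∃ C : ℝ, 0 < C ∧
      ∀ (S A : Type) (_ : PseudoMetricSpace S) (d n : ℕ) (_ : 0 < n)
        (φ : S → A → Fin d → ℝ) (L ε V lam0 : ℝ),
        0 ≤ L → 0 ≤ ε → 0 ≤ V → 0 < lam0 →
        (∀ (a : A) (i : Fin d) (x y : S), |φ x a i - φ y a i| ≤ L * dist x y) →
        (∀ (x : S) (a : A), ∑ i, (φ x a i) ^ 2 ≤ 1) →
        ∀ (s shat : Fin n → S) (a : Fin n → A) (y : Fin n → ℝ),
          (∀ i, |y i| ≤ V) →
          (∀ i, dist (shat i) (s i) ≤ ε) →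
          (d : ℝ) * L * ε < lam0 / 4 →
          ∀ (Sighat Sigtil : Matrix (Fin d) (Fin d) ℝ),
            Sighat = (n : ℝ)⁻¹ •
              ∑ i, vecMulVec (φ (shat i) (a i)) (φ (shat i) (a i)) →
            Sigtil = (n : ℝ)⁻¹ •
              ∑ i, vecMulVec (φ (s i) (a i)) (φ (s i) (a i)) →
            (∀ v : Fin d → ℝ, ∑ j, (v j) ^ 2 = 1 → lam0 ≤ v ⬝ᵥ (Sighat *ᵥ v)) →
            ∀ what wtil : Fin d → ℝ,
              what = Sighat⁻¹ *ᵥ ((n : ℝ)⁻¹ • ∑ i, y i • φ (shat i) (a i)) →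
              wtil = Sigtil⁻¹ *ᵥ ((n : ℝ)⁻¹ • ∑ i, y i • φ (s i) (a i)) →
              Real.sqrt (∑ j, (what j - wtil j) ^ 2)
                ≤ C * d * L * V * ε / (lam0 * (lam0 - 4 * d * L * ε)) := by
  refine ⟨3, by norm_num, ?_⟩
  intro S A _ d n hn φ L ε V lam0 hL hε hV hlam hlip hφn s shat a y hy hdist hsmall
    Sighat Sigtil hSh hSt hquad what wtil hw hwt
  rcases Nat.eq_zero_or_pos d with hd0 | hdpos
  · subst hd0
    simp
  -- basic positivity facts
  have hn' : (0:ℝ) < n := by exact_mod_cast hn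
  have hd1 : (1:ℝ) ≤ d := by exact_mod_cast hdpos
  set p : Fin n → Fin d → ℝ := fun i => φ (shat i) (a i) with hp
  set q : Fin n → Fin d → ℝ := fun i => φ (s i) (a i) with hq
  set δ : ℝ := Real.sqrt d * (L * ε) with hδdef
  have hLε : 0 ≤ L * ε := mul_nonneg hL hε
  have hδ0 : 0 ≤ δ := mul_nonneg (Real.sqrt_nonneg _) hLε
  have hδle : δ ≤ (d:ℝ) * L * ε := by
    have h1 : Real.sqrt d ≤ d := by
      have hs := Real.sq_sqrt (show (0:ℝ) ≤ d by positivity)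
      have hs0 := Real.sqrt_nonneg (d:ℝ)
      nlinarith [hs, hs0, hd1]
    calc δ = Real.sqrt d * (L*ε) := rfl
      _ ≤ d * (L*ε) := mul_le_mul_of_nonneg_right h1 hLε
      _ = (d:ℝ) * L * ε := by ring
  have hdLε0 : 0 ≤ (d:ℝ) * L * ε := by positivity
  have hden4 : 0 < lam0 - 4*(d:ℝ)*L*ε := by linarith
  have h2δ : 0 < lam0 - 2*δ := by linarith
  have hden24 : lam0 - 4*(d:ℝ)*L*ε ≤ lam0 - 2*δ := by linarith
  -- per-sample feature perturbation
  have hpq : ∀ i, Real.sqrt (∑ j, (p i j - q i j) ^ 2) ≤ δ := by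
    intro i
    have hsum : ∑ j, (p i j - q i j) ^ 2 ≤ (d:ℝ) * (L*ε)^2 := by
      calc ∑ j, (p i j - q i j) ^ 2 ≤ ∑ _j : Fin d, (L*ε)^2 := by
            refine Finset.sum_le_sum fun j _ => ?_
            have h1 : |p i j - q i j| ≤ L * ε :=
              (hlip (a i) j (shat i) (s i)).trans
                (mul_le_mul_of_nonneg_left (hdist i) hL)
            calc (p i j - q i j)^2 = |p i j - q i j|^2 := (sq_abs _).symm
              _ ≤ (L*ε)^2 := pow_le_pow_left₀ (abs_nonneg _) h1 2
        _ = (d:ℝ) * (L*ε)^2 := by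
            rw [Finset.sum_const, Finset.card_univ, Fintype.card_fin, nsmul_eq_mul]
    calc Real.sqrt (∑ j, (p i j - q i j) ^ 2) ≤ Real.sqrt ((d:ℝ) * (L*ε)^2) :=
          Real.sqrt_le_sqrt hsum
      _ = δ := by rw [Real.sqrt_mul (by positivity), Real.sqrt_sq hLε]
  -- feature norms at most 1
  have hp1 : ∀ i, Real.sqrt (∑ j, (p i j) ^ 2) ≤ 1 := by
    intro i
    have := Real.sqrt_le_sqrt (hφn (shat i) (a i))
    simpa using this
  have hq1 : ∀ i, Real.sqrt (∑ j, (q i j) ^ 2) ≤ 1 := by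
    intro i
    have := Real.sqrt_le_sqrt (hφn (s i) (a i))
    simpa using this
  -- dot product bounds
  have hdotp : ∀ (i : Fin n) (v : Fin d → ℝ), |p i ⬝ᵥ v| ≤ Real.sqrt (∑ j, v j ^ 2) := by
    intro i v
    calc |p i ⬝ᵥ v| ≤ Real.sqrt (∑ j, (p i j) ^ 2) * Real.sqrt (∑ j, v j ^ 2) := abs_dot_le _ _
      _ ≤ 1 * Real.sqrt (∑ j, v j ^ 2) :=
          mul_le_mul_of_nonneg_right (hp1 i) (Real.sqrt_nonneg _)
      _ = _ := one_mul _
  have hdotq : ∀ (i : Fin n) (v : Fin d → ℝ), |q i ⬝ᵥ v| ≤ Real.sqrt (∑ j, v j ^ 2) := by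
    intro i v
    calc |q i ⬝ᵥ v| ≤ Real.sqrt (∑ j, (q i j) ^ 2) * Real.sqrt (∑ j, v j ^ 2) := abs_dot_le _ _
      _ ≤ 1 * Real.sqrt (∑ j, v j ^ 2) :=
          mul_le_mul_of_nonneg_right (hq1 i) (Real.sqrt_nonneg _)
      _ = _ := one_mul _
  have hdiffdot : ∀ (i : Fin n) (v : Fin d → ℝ),
      |p i ⬝ᵥ v - q i ⬝ᵥ v| ≤ δ * Real.sqrt (∑ j, v j ^ 2) := by
    intro i v
    rw [← sub_dotProduct]
    calc |(p i - q i) ⬝ᵥ v|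
        ≤ Real.sqrt (∑ j, ((p i - q i) j) ^ 2) * Real.sqrt (∑ j, v j ^ 2) := abs_dot_le _ _
      _ ≤ δ * Real.sqrt (∑ j, v j ^ 2) := by
          refine mul_le_mul_of_nonneg_right ?_ (Real.sqrt_nonneg _)
          simpa [Pi.sub_apply] using hpq i
  -- averaging bound
  have havg : ∀ (f : Fin n → ℝ) (B : ℝ), (∀ i, |f i| ≤ B) → |(n:ℝ)⁻¹ * ∑ i, f i| ≤ B := by
    intro f B hf
    calc |(n:ℝ)⁻¹ * ∑ i, f i| = (n:ℝ)⁻¹ * |∑ i, f i| := by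
          rw [abs_mul, abs_of_nonneg (by positivity)]
      _ ≤ (n:ℝ)⁻¹ * ∑ i, |f i| := by
          have := Finset.abs_sum_le_sum_abs f Finset.univ
          exact mul_le_mul_of_nonneg_left this (by positivity)
      _ ≤ (n:ℝ)⁻¹ * ∑ _i : Fin n, B := by
          refine mul_le_mul_of_nonneg_left (Finset.sum_le_sum fun i _ => hf i) (by positivity)
      _ = (n:ℝ)⁻¹ * ((n:ℝ) * B) := by
          rw [Finset.sum_const, Finset.card_univ, Fintype.card_fin, nsmul_eq_mul]
      _ = B := by field_simp
  -- quadratic form representations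
  have hQh : ∀ v w : Fin d → ℝ,
      v ⬝ᵥ (Sighat *ᵥ w) = (n:ℝ)⁻¹ * ∑ i, (p i ⬝ᵥ v) * (p i ⬝ᵥ w) := by
    intro v w; rw [hSh]; exact quad_repr p _ v w
  have hQt : ∀ v w : Fin d → ℝ,
      v ⬝ᵥ (Sigtil *ᵥ w) = (n:ℝ)⁻¹ * ∑ i, (q i ⬝ᵥ v) * (q i ⬝ᵥ w) := by
    intro v w; rw [hSt]; exact quad_repr q _ v w
  -- bilinear perturbation bound
  have hbil : ∀ v w : Fin d → ℝ,
      |v ⬝ᵥ (Sigtil *ᵥ w) - v ⬝ᵥ (Sighat *ᵥ w)|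
        ≤ 2 * δ * Real.sqrt (∑ j, v j ^ 2) * Real.sqrt (∑ j, w j ^ 2) := by
    intro v w
    rw [hQt, hQh, ← mul_sub, ← Finset.sum_sub_distrib]
    have hterm : ∀ i : Fin n,
        |(q i ⬝ᵥ v) * (q i ⬝ᵥ w) - (p i ⬝ᵥ v) * (p i ⬝ᵥ w)|
          ≤ 2 * δ * Real.sqrt (∑ j, v j ^ 2) * Real.sqrt (∑ j, w j ^ 2) := by
      intro i
      have e : (q i ⬝ᵥ v) * (q i ⬝ᵥ w) - (p i ⬝ᵥ v) * (p i ⬝ᵥ w)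
          = (q i ⬝ᵥ v - p i ⬝ᵥ v) * (q i ⬝ᵥ w) + (p i ⬝ᵥ v) * (q i ⬝ᵥ w - p i ⬝ᵥ w) := by ring
      rw [e]
      have h1 : |q i ⬝ᵥ v - p i ⬝ᵥ v| ≤ δ * Real.sqrt (∑ j, v j ^ 2) := by
        rw [abs_sub_comm]; exact hdiffdot i v
      have h2 : |q i ⬝ᵥ w - p i ⬝ᵥ w| ≤ δ * Real.sqrt (∑ j, w j ^ 2) := by
        rw [abs_sub_comm]; exact hdiffdot i w
      calc |(q i ⬝ᵥ v - p i ⬝ᵥ v) * (q i ⬝ᵥ w) + (p i ⬝ᵥ v) * (q i ⬝ᵥ w - p i ⬝ᵥ w)|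
          ≤ |(q i ⬝ᵥ v - p i ⬝ᵥ v)| * |q i ⬝ᵥ w| + |p i ⬝ᵥ v| * |q i ⬝ᵥ w - p i ⬝ᵥ w| := by
            refine (abs_add_le _ _).trans ?_
            rw [abs_mul, abs_mul]
        _ ≤ (δ * Real.sqrt (∑ j, v j ^ 2)) * Real.sqrt (∑ j, w j ^ 2)
              + Real.sqrt (∑ j, v j ^ 2) * (δ * Real.sqrt (∑ j, w j ^ 2)) := by
            refine add_le_add (mul_le_mul h1 (hdotq i w) (abs_nonneg _) (by positivity))
              (mul_le_mul (hdotp i v) h2 (abs_nonneg _) (Real.sqrt_nonneg _))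
        _ = 2 * δ * Real.sqrt (∑ j, v j ^ 2) * Real.sqrt (∑ j, w j ^ 2) := by ring
    exact havg _ _ hterm
  -- linear functionals
  set bh : Fin d → ℝ := (n:ℝ)⁻¹ • ∑ i, y i • p i with hbh
  set bt : Fin d → ℝ := (n:ℝ)⁻¹ • ∑ i, y i • q i with hbt
  have hdot_bh : ∀ v : Fin d → ℝ, |v ⬝ᵥ bh| ≤ V * Real.sqrt (∑ j, v j ^ 2) := by
    intro v
    rw [hbh, dot_avg]
    refine havg _ _ fun i => ?_
    rw [abs_mul]
    exact mul_le_mul (hy i) (hdotp i v) (abs_nonneg _) hV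
  have hdot_bdiff : ∀ v : Fin d → ℝ,
      |v ⬝ᵥ bh - v ⬝ᵥ bt| ≤ V * (δ * Real.sqrt (∑ j, v j ^ 2)) := by
    intro v
    rw [hbh, hbt, dot_avg, dot_avg, ← mul_sub, ← Finset.sum_sub_distrib]
    refine havg _ _ fun i => ?_
    rw [← mul_sub, abs_mul]
    exact mul_le_mul (hy i) (hdiffdot i v) (abs_nonneg _) hV
  -- positive definiteness
  have hsumpos : ∀ x : Fin d → ℝ, x ≠ 0 → 0 < ∑ j, (x j) ^ 2 := by
    intro x hx
    rcases Function.ne_iff.mp hx with ⟨j, hj⟩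
    exact Finset.sum_pos' (fun i _ => sq_nonneg _)
      ⟨j, Finset.mem_univ j, by rw [← sq_abs]; exact pow_pos (abs_pos.mpr hj) 2⟩
  have hposSh : Sighat.PosDef := by
    refine Matrix.PosDef.of_dotProduct_mulVec_pos (by rw [hSh]; exact herm_aux p _) fun x hx => ?_
    rw [star_trivial]
    exact lt_of_lt_of_le (mul_pos hlam (hsumpos x hx)) (quad_lower hquad x)
  have hquadt : ∀ v : Fin d → ℝ,
      (lam0 - 2*δ) * ∑ j, (v j) ^ 2 ≤ v ⬝ᵥ (Sigtil *ᵥ v) := by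
    intro v
    have h1 := quad_lower hquad v
    have h2 := (abs_le.mp (hbil v v)).1
    have h3 : Real.sqrt (∑ j, v j ^ 2) * Real.sqrt (∑ j, v j ^ 2) = ∑ j, v j ^ 2 :=
      Real.mul_self_sqrt (by positivity)
    nlinarith [h1, h2, h3]
  have hposSt : Sigtil.PosDef := by
    refine Matrix.PosDef.of_dotProduct_mulVec_pos (by rw [hSt]; exact herm_aux q _) fun x hx => ?_
    rw [star_trivial]
    exact lt_of_lt_of_le (mul_pos h2δ (hsumpos x hx)) (hquadt x)
  have hdetSh : IsUnit Sighat.det := isUnit_iff_ne_zero.mpr hposSh.det_pos.ne'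
  have hdetSt : IsUnit Sigtil.det := isUnit_iff_ne_zero.mpr hposSt.det_pos.ne'
  have heqh : Sighat *ᵥ what = bh := by
    rw [hw, Matrix.mulVec_mulVec, Matrix.mul_nonsing_inv _ hdetSh, Matrix.one_mulVec]
  have heqt : Sigtil *ᵥ wtil = bt := by
    rw [hwt, Matrix.mulVec_mulVec, Matrix.mul_nonsing_inv _ hdetSt, Matrix.one_mulVec]
  -- norm of what
  set nw : ℝ := Real.sqrt (∑ j, (what j) ^ 2) with hnwdef
  have hnw0 : 0 ≤ nw := Real.sqrt_nonneg _
  have hnwsq : nw * nw = ∑ j, (what j) ^ 2 := Real.mul_self_sqrt (by positivity)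
  have hlamnw : lam0 * nw ≤ V := by
    have h1 : lam0 * (nw * nw) ≤ V * nw := by
      rw [hnwsq]
      calc lam0 * ∑ j, (what j) ^ 2 ≤ what ⬝ᵥ (Sighat *ᵥ what) := quad_lower hquad what
        _ = what ⬝ᵥ bh := by rw [heqh]
        _ ≤ |what ⬝ᵥ bh| := le_abs_self _
        _ ≤ V * nw := hdot_bh what
    rcases eq_or_lt_of_le hnw0 with h | h
    · rw [← h]; simpa using hV
    · have := (mul_le_mul_iff_left₀ h).mp (by linarith [h1] : lam0 * nw * nw ≤ V * nw)
      exact this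
  -- lam0 ≤ 1
  have hlam1 : lam0 ≤ 1 := by
    set j0 : Fin d := ⟨0, hdpos⟩
    set e0 : Fin d → ℝ := fun j => if j = j0 then 1 else 0 with he0def
    have he0 : ∑ j, (e0 j) ^ 2 = 1 := by
      simp [he0def, apply_ite (· ^ 2)]
    have h1 := hquad e0 he0
    have h2 : ∀ i, p i ⬝ᵥ e0 = p i j0 := by
      intro i
      simp [dotProduct, he0def, mul_ite]
    have h3 : |(n:ℝ)⁻¹ * ∑ i, (p i ⬝ᵥ e0) * (p i ⬝ᵥ e0)| ≤ 1 := by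
      refine havg _ _ fun i => ?_
      rw [h2 i, abs_mul_self]
      calc p i j0 * p i j0 = (p i j0) ^ 2 := by ring
        _ ≤ ∑ j, (p i j) ^ 2 :=
            Finset.single_le_sum (fun j _ => sq_nonneg (p i j)) (Finset.mem_univ j0)
        _ ≤ 1 := hφn (shat i) (a i)
    calc lam0 ≤ e0 ⬝ᵥ (Sighat *ᵥ e0) := h1
      _ = (n:ℝ)⁻¹ * ∑ i, (p i ⬝ᵥ e0) * (p i ⬝ᵥ e0) := hQh e0 e0
      _ ≤ |(n:ℝ)⁻¹ * ∑ i, (p i ⬝ᵥ e0) * (p i ⬝ᵥ e0)| := le_abs_self _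
      _ ≤ 1 := h3
  -- the difference vector
  set u : Fin d → ℝ := what - wtil with hu
  set nu : ℝ := Real.sqrt (∑ j, (u j) ^ 2) with hnudef
  have hnu0 : 0 ≤ nu := Real.sqrt_nonneg _
  have hnusq : nu * nu = ∑ j, (u j) ^ 2 := Real.mul_self_sqrt (by positivity)
  have hid : u ⬝ᵥ (Sigtil *ᵥ u) = (u ⬝ᵥ bh - u ⬝ᵥ bt)
      + (u ⬝ᵥ (Sigtil *ᵥ what) - u ⬝ᵥ (Sighat *ᵥ what)) := by
    have e1 : Sigtil *ᵥ u = Sigtil *ᵥ what - Sigtil *ᵥ wtil := by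
      rw [hu]; exact Matrix.mulVec_sub _ _ _
    rw [e1, dotProduct_sub, heqt, ← heqh]
    ring
  -- final chain
  clear_value nu nw u δ p q bh bt
  have hmain : nu * (lam0 * (lam0 - 2*δ)) ≤ 3 * V * δ := by
    have hlow : (lam0 - 2*δ) * (nu * nu) ≤ u ⬝ᵥ (Sigtil *ᵥ u) := by
      rw [hnusq]; exact hquadt u
    have hup : u ⬝ᵥ (Sigtil *ᵥ u) ≤ V * (δ * nu) + 2 * δ * nu * nw := by
      have hA := (abs_le.mp (hdot_bdiff u)).2
      have hB := (abs_le.mp (hbil u what)).2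
      rw [← hnudef] at hA
      rw [← hnudef, ← hnwdef] at hB
      rw [hid]
      linarith [hA, hB]
    have h := le_trans hlow hup
    rcases eq_or_lt_of_le hnu0 with h0 | h0
    · rw [← h0]; rw [zero_mul]; positivity
    · have e1 : lam0 * ((lam0 - 2*δ) * (nu * nu)) ≤ lam0 * (V * (δ * nu) + 2 * δ * nu * nw) :=
        mul_le_mul_of_nonneg_left h hlam.le
      have e2 : lam0 * (V * (δ * nu)) ≤ 1 * (V * (δ * nu)) :=
        mul_le_mul_of_nonneg_right hlam1 (mul_nonneg hV (mul_nonneg hδ0 hnu0))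
      have e3 : (2 * δ * nu) * (lam0 * nw) ≤ (2 * δ * nu) * V :=
        mul_le_mul_of_nonneg_left hlamnw
          (mul_nonneg (mul_nonneg (by norm_num) hδ0) hnu0)
      have e4 : nu * (lam0 * (lam0 - 2*δ)) * nu ≤ (3 * V * δ) * nu := by linarith [e1, e2, e3]
      exact le_of_mul_le_mul_right e4 h0
  have hbound : nu ≤ 3 * V * δ / (lam0 * (lam0 - 2*δ)) := by
    rw [le_div_iff₀ (mul_pos hlam h2δ)]
    exact hmain
  have hfinal : (3:ℝ) * V * δ / (lam0 * (lam0 - 2*δ))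
      ≤ 3 * (d:ℝ) * L * V * ε / (lam0 * (lam0 - 4 * (d:ℝ) * L * ε)) := by
    refine div_le_div₀ (by positivity) ?_ (mul_pos hlam hden4) ?_
    · nlinarith [hδle, hV]
    · have : lam0 * (lam0 - 4 * (d:ℝ) * L * ε) ≤ lam0 * (lam0 - 2*δ) :=
        mul_le_mul_of_nonneg_left (by linarith) hlam.le
      linarith
  have hgoal : Real.sqrt (∑ j, (what j - wtil j) ^ 2) = nu := by
    rw [hnudef]
    congr 1
    exact Finset.sum_congr rfl fun j _ => by rw [hu]; simp
  rw [hgoal]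
  calc nu ≤ 3 * V * δ / (lam0 * (lam0 - 2*δ)) := hbound
    _ ≤ 3 * (d:ℝ) * L * V * ε / (lam0 * (lam0 - 4 * (d:ℝ) * L * ε)) := hfinal
end

section
/- In a discounted stationary MDP with finite action space, bounded measurable rewards, and discount γ ∈ (0,1), for every history-dependent (possibly randomized) policy π and initial distribution ν there exists a stationary Markov deterministic policy π' with J_ν(π') ≥ J_ν(π); consequently sup over history-dependent policies of J_ν equals sup over stationary deterministic policies. -/
open Filter

namespace Stmt18Aux

lemma pmf_sum {α : Type*} [Fintype α] (p : PMF α) : ∑ a, (p a).toReal = 1 := by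
  have h := p.tsum_coe
  rw [tsum_fintype] at h
  rw [← ENNReal.toReal_sum (fun a _ => p.apply_ne_top a), h, ENNReal.toReal_one]

lemma avg_le {α : Type*} [Fintype α] (p : PMF α) {f : α → ℝ} {c : ℝ} (h : ∀ a, f a ≤ c) :
    ∑ a, (p a).toReal * f a ≤ c := by
  calc ∑ a, (p a).toReal * f a ≤ ∑ a, (p a).toReal * c := by
        apply Finset.sum_le_sum; intro a _
        exact mul_le_mul_of_nonneg_left (h a) ENNReal.toReal_nonneg
    _ = c := by rw [← Finset.sum_mul, pmf_sum, one_mul]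

lemma abs_avg_le {α : Type*} [Fintype α] (p : PMF α) {f : α → ℝ} {c : ℝ}
    (h : ∀ a, |f a| ≤ c) : |∑ a, (p a).toReal * f a| ≤ c := by
  calc |∑ a, (p a).toReal * f a| ≤ ∑ a, |(p a).toReal * f a| := Finset.abs_sum_le_sum_abs _ _
    _ = ∑ a, (p a).toReal * |f a| := by
        apply Finset.sum_congr rfl; intro a _
        rw [abs_mul, abs_of_nonneg ENNReal.toReal_nonneg]
    _ ≤ c := avg_le p h

variable {S A : Type*} [Fintype S] [Fintype A]

/-- One-step state-action value. -/
noncomputable def Q (P : S → A → PMF S) (r : S → A → ℝ) (γ : ℝ)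
    (f : S → ℝ) (s : S) (a : A) : ℝ :=
  r s a + γ * ∑ s', ((P s a) s').toReal * f s'

variable [Nonempty A]

/-- Optimal finite-horizon value function. -/
noncomputable def OV (P : S → A → PMF S) (r : S → A → ℝ) (γ : ℝ) : ℕ → S → ℝ
  | 0, _ => 0
  | n + 1, s => Finset.univ.sup' Finset.univ_nonempty (Q P r γ (OV P r γ n) s)

lemma sup'_diff {f g : A → ℝ} {c : ℝ} (h : ∀ a, |f a - g a| ≤ c) :
    |Finset.univ.sup' Finset.univ_nonempty f - Finset.univ.sup' Finset.univ_nonempty g| ≤ c := by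
  rw [abs_sub_le_iff]
  constructor
  · rw [sub_le_iff_le_add]
    apply Finset.sup'_le
    intro a _
    have h1 := (abs_sub_le_iff.mp (h a)).1
    have h2 := Finset.le_sup' g (Finset.mem_univ a)
    linarith
  · rw [sub_le_iff_le_add]
    apply Finset.sup'_le
    intro a _
    have h1 := (abs_sub_le_iff.mp (h a)).2
    have h2 := Finset.le_sup' f (Finset.mem_univ a)
    linarith

set_option linter.unusedSectionVars false in
lemma Q_diff (P : S → A → PMF S) (r : S → A → ℝ) {γ : ℝ} (hγ0 : 0 ≤ γ)
    {f g : S → ℝ} {c : ℝ} (h : ∀ s, |f s - g s| ≤ c) (s : S) (a : A) :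
    |Q P r γ f s a - Q P r γ g s a| ≤ γ * c := by
  have e : Q P r γ f s a - Q P r γ g s a
      = γ * ∑ s', ((P s a) s').toReal * (f s' - g s') := by
    simp only [Q, mul_sub, Finset.sum_sub_distrib]
    ring
  rw [e, abs_mul, abs_of_nonneg hγ0]
  exact mul_le_mul_of_nonneg_left (abs_avg_le _ h) hγ0

end Stmt18Aux

open Stmt18Aux

/-- In a discounted stationary MDP with finite action space,
bounded rewards and discount `γ ∈ (0,1)`, for every initial state there is a
single stationary Markov deterministic policy `π'` whose value dominates the
value of every history-dependent randomized policy `π`; consequently the sup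
over history-dependent policies of the expected discounted return equals the
sup over stationary deterministic policies.  (Values `J` are characterized as
limits of the finite-horizon values `val`.) -/
theorem stmt18 {S A : Type*} [Fintype S] [Fintype A] [Nonempty A]
    (P : S → A → PMF S) (r : S → A → ℝ) (γ : ℝ)
    (hγ : 0 < γ) (hγ1 : γ < 1)
    (Rmax : ℝ) (hr : ∀ s a, |r s a| ≤ Rmax) :
    ∃ π' : S → A,
      ∀ (s0 : S) (Jstat : ℝ),
        Tendsto (fun n => val P r γ (fun _ s => PMF.pure (π' s)) n [] s0)
          atTop (nhds Jstat) →
        ∀ (π : List (S × A) → S → PMF A) (Jπ : ℝ),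
          Tendsto (fun n => val P r γ π n [] s0) atTop (nhds Jπ) →
          Jπ ≤ Jstat := by
  by_cases hS : Nonempty S
  swap
  · exact ⟨fun _ => Classical.arbitrary A, fun s0 => absurd ⟨s0⟩ hS⟩
  have hγ0 : (0:ℝ) ≤ γ := hγ.le
  have hRmax : 0 ≤ Rmax :=
    le_trans (abs_nonneg _) (hr (Classical.arbitrary S) (Classical.arbitrary A))
  have h1γ : 0 < 1 - γ := by linarith
  set K : ℝ := Rmax / (1 - γ) with hKdef
  have hK : 0 ≤ K := div_nonneg hRmax h1γ.le
  have hKR : Rmax = K * (1 - γ) := by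
    rw [hKdef, div_mul_cancel₀ _ h1γ.ne']
  -- one-step differences of the optimal values
  have hdiff : ∀ n s, |OV P r γ (n+1) s - OV P r γ n s| ≤ Rmax * γ ^ n := by
    intro n
    induction n with
    | zero =>
      intro s
      have : ∀ a : A, |Q P r γ (OV P r γ 0) s a - (0:ℝ)| ≤ Rmax := by
        intro a
        simp only [Q, OV, mul_zero, Finset.sum_const_zero, sub_zero, add_zero]
        exact hr s a
      have h1 := sup'_diff (g := fun _ : A => (0:ℝ)) this
      simpa [OV, Finset.sup'_const] using h1
    | succ n ih =>
      intro s
      have h1 : ∀ a : A, |Q P r γ (OV P r γ (n+1)) s a - Q P r γ (OV P r γ n) s a|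
          ≤ γ * (Rmax * γ ^ n) := Q_diff P r hγ0 ih s
      have h2 := sup'_diff h1
      calc |OV P r γ (n+2) s - OV P r γ (n+1) s| ≤ γ * (Rmax * γ ^ n) := h2
        _ = Rmax * γ ^ (n+1) := by ring
  -- telescoping tail bound
  have htail : ∀ n m s, |OV P r γ (n+m) s - OV P r γ n s| ≤ K * (γ ^ n - γ ^ (n+m)) := by
    intro n m s
    induction m with
    | zero => simp
    | succ m ih =>
      have h1 := hdiff (n+m) s
      have e : K * γ ^ (n+m) - K * γ ^ (n+m+1) = Rmax * γ ^ (n+m) := by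
        rw [pow_succ, hKR]; ring
      have h3 : |OV P r γ (n+(m+1)) s - OV P r γ n s|
          ≤ |OV P r γ (n+m+1) s - OV P r γ (n+m) s| + |OV P r γ (n+m) s - OV P r γ n s| := by
        rw [show n+(m+1) = n+m+1 by ring]
        exact abs_sub_le _ _ _
      have : γ ^ (n + (m+1)) = γ ^ (n+m+1) := by ring_nf
      rw [this]
      linarith
  have htail' : ∀ n m s, n ≤ m → |OV P r γ m s - OV P r γ n s| ≤ K * γ ^ n := by
    intro n m s hnm
    obtain ⟨k, rfl⟩ := Nat.exists_eq_add_of_le hnm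
    have h1 := htail n k s
    have h2 : 0 ≤ γ ^ (n+k) := pow_nonneg hγ0 _
    nlinarith
  -- the limit value function
  set Vinf : S → ℝ := fun s => ∑' k, (OV P r γ (k+1) s - OV P r γ k s) with hVdef
  have hconv : ∀ s, Tendsto (fun n => OV P r γ n s) atTop (nhds (Vinf s)) := by
    intro s
    have hsum : Summable (fun k => OV P r γ (k+1) s - OV P r γ k s) := by
      apply Summable.of_norm_bounded (g := fun k => Rmax * γ ^ k)
        ((summable_geometric_of_lt_one hγ0 hγ1).mul_left Rmax)
      intro k
      simpa [Real.norm_eq_abs] using hdiff k s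
    have h1 := hsum.hasSum.tendsto_sum_nat
    have e : ∀ n, ∑ i ∈ Finset.range n, (OV P r γ (i+1) s - OV P r γ i s)
        = OV P r γ n s := by
      intro n
      rw [Finset.sum_range_sub (fun k => OV P r γ k s)]
      simp [OV]
    simpa [e] using h1
  have hVtail : ∀ n s, |Vinf s - OV P r γ n s| ≤ K * γ ^ n := by
    intro n s
    have h1 : Tendsto (fun m => |OV P r γ m s - OV P r γ n s|) atTop
        (nhds (|Vinf s - OV P r γ n s|)) := ((hconv s).sub tendsto_const_nhds).abs
    apply le_of_tendsto h1
    filter_upwards [eventually_ge_atTop n] with m hm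
    exact htail' n m s hm
  have hVbd : ∀ s, |Vinf s| ≤ K := by
    intro s
    have := hVtail 0 s
    simpa [OV] using this
  -- Bellman equation for Vinf
  have hBell : ∀ s, Finset.univ.sup' Finset.univ_nonempty (Q P r γ Vinf s) = Vinf s := by
    intro s
    have key : ∀ n : ℕ, |Finset.univ.sup' Finset.univ_nonempty (Q P r γ Vinf s) - Vinf s|
        ≤ γ * (K * γ ^ n) + K * γ ^ (n+1) := by
      intro n
      have h1 : |Finset.univ.sup' Finset.univ_nonempty (Q P r γ Vinf s)
          - OV P r γ (n+1) s| ≤ γ * (K * γ ^ n) :=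
        sup'_diff (Q_diff P r hγ0 (fun s' => hVtail n s') s)
      have h2 : |OV P r γ (n+1) s - Vinf s| ≤ K * γ ^ (n+1) := by
        rw [abs_sub_comm]; exact hVtail (n+1) s
      calc |Finset.univ.sup' Finset.univ_nonempty (Q P r γ Vinf s) - Vinf s|
          ≤ |Finset.univ.sup' Finset.univ_nonempty (Q P r γ Vinf s) - OV P r γ (n+1) s|
            + |OV P r γ (n+1) s - Vinf s| := abs_sub_le _ _ _
        _ ≤ γ * (K * γ ^ n) + K * γ ^ (n+1) := add_le_add h1 h2
    have h0 : Tendsto (fun n : ℕ => γ * (K * γ ^ n) + K * γ ^ (n+1)) atTop (nhds 0) := by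
      have hg : Tendsto (fun n : ℕ => γ ^ n) atTop (nhds 0) :=
        tendsto_pow_atTop_nhds_zero_of_lt_one hγ0 hγ1
      have ha : Tendsto (fun n : ℕ => γ * (K * γ ^ n)) atTop (nhds 0) := by
        simpa [mul_assoc] using (hg.const_mul (γ * K))
      have hb : Tendsto (fun n : ℕ => K * γ ^ (n+1)) atTop (nhds 0) := by
        have : Tendsto (fun n : ℕ => γ ^ (n+1)) atTop (nhds 0) :=
          hg.comp (tendsto_add_atTop_nat 1)
        simpa using this.const_mul K
      simpa using ha.add hb
    have hle : |Finset.univ.sup' Finset.univ_nonempty (Q P r γ Vinf s) - Vinf s| ≤ 0 :=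
      ge_of_tendsto' h0 key
    have := le_antisymm hle (abs_nonneg _)
    rwa [abs_eq_zero, sub_eq_zero] at this
  -- greedy policy
  have hargmax : ∀ s : S, ∃ a : A, ∀ b : A, Q P r γ Vinf s b ≤ Q P r γ Vinf s a := by
    intro s
    obtain ⟨a, -, ha⟩ := Finset.exists_max_image Finset.univ (Q P r γ Vinf s)
      Finset.univ_nonempty
    exact ⟨a, fun b => ha b (Finset.mem_univ b)⟩
  choose π' hπ' using hargmax
  have hQmax : ∀ s, Q P r γ Vinf s (π' s) = Vinf s := by
    intro s
    rw [← hBell s]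
    exact le_antisymm (Finset.le_sup' _ (Finset.mem_univ _))
      (Finset.sup'_le _ _ fun b _ => hπ' s b)
  -- any policy's finite-horizon value is dominated by OV
  have hval_le : ∀ (π : List (S × A) → S → PMF A) (n : ℕ) (h : List (S × A)) (s : S),
      val P r γ π n h s ≤ OV P r γ n s := by
    intro π n
    induction n with
    | zero => intro h s; simp [val, OV]
    | succ n ih =>
      intro h s
      show ∑ a, ((π h s) a).toReal *
        (r s a + γ * ∑ s', ((P s a) s').toReal * val P r γ π n (h ++ [(s, a)]) s')
          ≤ OV P r γ (n+1) s
      apply avg_le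
      intro a
      have inner : r s a + γ * ∑ s', ((P s a) s').toReal * val P r γ π n (h ++ [(s, a)]) s'
          ≤ Q P r γ (OV P r γ n) s a := by
        unfold Q
        have hsum : ∑ s', ((P s a) s').toReal * val P r γ π n (h ++ [(s, a)]) s'
            ≤ ∑ s', ((P s a) s').toReal * OV P r γ n s' :=
          Finset.sum_le_sum (fun s' _ =>
            mul_le_mul_of_nonneg_left (ih _ s') ENNReal.toReal_nonneg)
        have := mul_le_mul_of_nonneg_left hsum hγ0
        linarith
      exact inner.trans (Finset.le_sup' _ (Finset.mem_univ a))
  -- stationary policy recursion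
  have hstat : ∀ (n : ℕ) (h : List (S × A)) (s : S),
      val P r γ (fun _ s => PMF.pure (π' s)) (n+1) h s
        = r s (π' s) + γ * ∑ s', ((P s (π' s)) s').toReal *
            val P r γ (fun _ s => PMF.pure (π' s)) n (h ++ [(s, π' s)]) s' := by
    intro n h s
    show (∑ a, ((PMF.pure (π' s)) a).toReal * _) = _
    rw [Finset.sum_eq_single (π' s)]
    · simp [PMF.pure_apply]
    · intro b _ hb
      simp [PMF.pure_apply, hb]
    · intro hmem
      exact absurd (Finset.mem_univ _) hmem
  -- stationary value converges to Vinf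
  have hstat_close : ∀ (n : ℕ) (h : List (S × A)) (s : S),
      |val P r γ (fun _ s => PMF.pure (π' s)) n h s - Vinf s| ≤ K * γ ^ n := by
    intro n
    induction n with
    | zero =>
      intro h s
      simpa [val, abs_sub_comm] using hVbd s
    | succ n ih =>
      intro h s
      have e : val P r γ (fun _ s => PMF.pure (π' s)) (n+1) h s - Vinf s
          = γ * ∑ s', ((P s (π' s)) s').toReal *
              (val P r γ (fun _ s => PMF.pure (π' s)) n (h ++ [(s, π' s)]) s' - Vinf s') := by
        rw [hstat n h s, ← hQmax s]
        simp only [Q, mul_sub, Finset.sum_sub_distrib]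
        ring
      rw [e, abs_mul, abs_of_nonneg hγ0]
      calc γ * |∑ s', ((P s (π' s)) s').toReal *
            (val P r γ (fun _ s => PMF.pure (π' s)) n (h ++ [(s, π' s)]) s' - Vinf s')|
          ≤ γ * (K * γ ^ n) := mul_le_mul_of_nonneg_left
            (abs_avg_le _ (fun s' => ih _ s')) hγ0
        _ = K * γ ^ (n+1) := by ring
  -- conclude
  refine ⟨π', ?_⟩
  intro s0 Jstat hJstat π Jπ hJπ
  have hstat_tendsto : Tendsto (fun n => val P r γ (fun _ s => PMF.pure (π' s)) n [] s0)
      atTop (nhds (Vinf s0)) := by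
    have h0 : Tendsto (fun n => val P r γ (fun _ s => PMF.pure (π' s)) n [] s0 - Vinf s0)
        atTop (nhds 0) := by
      refine squeeze_zero_norm (a := fun n => K * γ ^ n) (fun n => ?_) ?_
      · simpa [Real.norm_eq_abs] using hstat_close n [] s0
      · have hg : Tendsto (fun n : ℕ => γ ^ n) atTop (nhds 0) :=
          tendsto_pow_atTop_nhds_zero_of_lt_one hγ0 hγ1
        simpa using hg.const_mul K
    have := h0.add (tendsto_const_nhds (x := Vinf s0))
    simpa using this
  have hJstat_eq : Jstat = Vinf s0 := tendsto_nhds_unique hJstat hstat_tendsto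
  rw [hJstat_eq]
  exact le_of_tendsto_of_tendsto' hJπ (hconv s0) (fun n => hval_le π n [] s0)
end
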